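/- arXiv:2004.01674 — 9 statements merged into one kernel-verified Lean document; each statement's English description precedes it below -/
import Mathlib

section
/- Every selective ultrafilter is normal: if F is a selective non-principal ultrafilter on ℕ and {A_i}_{i∈ℕ} is a family of sets in F, then there exists B ∈ F such that for all i, j ∈ B, if i < j then j ∈ A_i. -/
/-!
Let `f x` be the least `i` with `x ≤ i` or `x ∉ A i`. Each fiber `f⁻¹{i}` misses
`Ioi i ∩ A i ∈ F`, so selectivity makes `f` injective on some `B₀ ∈ F`; then `f` tends to
infinity along `B₀`, and it remains to find `B ∈ F` with `i < f j` whenever `i < j` in `B`,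
since then `j ∈ A i`. Cut `ℕ` into blocks `[n k, n (k + 1))` so long that `f y ≥ n k` for
`y ∈ B₀` beyond the block `k + 1`. A second use of selectivity, on the block index, together with
a choice of parity, gives `B₁ ∈ F` meeting every block at most once and never two adjacent ones.
Then `B₀ ∩ B₁` works.
-/

open Filter Set

def IsSelective (F : Ultrafilter ℕ) : Prop :=
  ∀ f : ℕ → ℕ, (∀ i, f ⁻¹' {i} ∉ F) → ∃ B ∈ F, InjOn f B

namespace Ultrafilter

theorem notMem_of_finite {α : Type*} {F : Ultrafilter α} (hnp : ∀ a, {a} ∉ F) {s : Set α}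
    (hs : s.Finite) : s ∉ F := fun hsF => by
  obtain ⟨a, -, rfl⟩ := eq_pure_of_finite_mem hs hsF
  exact hnp a (mem_pure.2 rfl)

theorem Ioi_mem {F : Ultrafilter ℕ} (hnp : ∀ n, {n} ∉ F) (i : ℕ) : Ioi i ∈ F := by
  rw [← compl_Iic]
  exact compl_mem_iff_notMem.2 (notMem_of_finite hnp (finite_Iic i))

theorem exists_fiber_notMem_forall_lt_mem {F : Ultrafilter ℕ} (hnp : ∀ n, {n} ∉ F)
    {A : ℕ → Set ℕ} (hA : ∀ i, A i ∈ F) :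
    ∃ f : ℕ → ℕ, (∀ i, f ⁻¹' {i} ∉ F) ∧ ∀ x i, i < f x → x ∈ A i := by
  classical
  have hex : ∀ x, ∃ i, x ≤ i ∨ x ∉ A i := fun x => ⟨x, .inl le_rfl⟩
  refine ⟨fun x => Nat.find (hex x), fun i hi => ?_, fun x i hi => ?_⟩
  · obtain ⟨x, hxi, hix, hxA⟩ :=
      nonempty_of_mem (inter_mem hi (inter_mem (Ioi_mem hnp i) (hA i)))
    have hspec := Nat.find_spec (hex x)
    rw [show Nat.find (hex x) = i from hxi] at hspec
    exact hspec.elim (not_le.2 hix) (· hxA)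
  · exact not_not.1 (not_or.1 (Nat.find_min (hex x) hi)).2

end Ultrafilter

theorem exists_le_apply_of_injOn {f : ℕ → ℕ} {s : Set ℕ} (hf : InjOn f s) (c : ℕ) :
    ∃ N, ∀ y ∈ s, N ≤ y → c ≤ f y := by
  have hfin : {y ∈ s | f y < c}.Finite :=
    Finite.of_finite_image ((finite_Iio c).subset (image_subset_iff.2 fun _ hy => hy.2))
      (hf.mono (sep_subset _ _))
  obtain ⟨M, hM⟩ := hfin.bddAbove
  refine ⟨M + 1, fun y hy hMy => not_lt.1 fun hfy => ?_⟩
  have := hM ⟨hy, hfy⟩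
  omega

theorem exists_strictMono_zero_le_succ (g : ℕ → ℕ) :
    ∃ n : ℕ → ℕ, StrictMono n ∧ n 0 = 0 ∧ ∀ k, g (n k) ≤ n (k + 1) :=
  ⟨fun k => Nat.rec 0 (fun _ m => max (m + 1) (g m)) k,
    strictMono_nat_of_lt_succ fun _ => lt_max_of_lt_left (Nat.lt_succ_self _), rfl,
    fun _ => le_max_right _ _⟩

theorem StrictMono.exists_block_index {n : ℕ → ℕ} (hn : StrictMono n) (h0 : n 0 = 0) :
    ∃ h : ℕ → ℕ, ∀ x, n (h x) ≤ x ∧ x < n (h x + 1) := by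
  have hex : ∀ x, ∃ k, x < n (k + 1) := fun x =>
    ⟨x, (Nat.lt_succ_self x).trans_le (hn.id_le _)⟩
  refine ⟨fun x => Nat.find (hex x), fun x => ⟨?_, Nat.find_spec (hex x)⟩⟩
  show n (Nat.find (hex x)) ≤ x
  rcases hk : Nat.find (hex x) with _ | k
  · exact h0.trans_le (Nat.zero_le x)
  · exact not_lt.1 (Nat.find_min (hex x) (hk ▸ Nat.lt_succ_self k))

namespace IsSelective

variable {F : Ultrafilter ℕ}

theorem exists_mem_add_two_le (hF : IsSelective F) (hnp : ∀ n, {n} ∉ F) {h : ℕ → ℕ}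
    (hh : Monotone h) (hfib : ∀ k, (h ⁻¹' {k}).Finite) :
    ∃ B ∈ F, ∀ x ∈ B, ∀ y ∈ B, x < y → h x + 2 ≤ h y := by
  obtain ⟨B, hB, hinj⟩ := hF h fun k => Ultrafilter.notMem_of_finite hnp (hfib k)
  obtain ⟨P, hP, hpar⟩ : ∃ P ∈ F, ∀ x ∈ P, ∀ y ∈ P, h x % 2 = h y % 2 := by
    rcases F.mem_or_compl_mem {x | h x % 2 = 0} with hP | hP
    · exact ⟨_, hP, fun x hx y hy => hx.trans hy.symm⟩
    · refine ⟨_, hP, fun x hx y hy => ?_⟩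
      simp only [mem_compl_iff, mem_ofPred_eq] at hx hy
      omega
  refine ⟨B ∩ P, inter_mem hB hP, fun x hx y hy hxy => ?_⟩
  have hle := hh hxy.le
  have hne : h x ≠ h y := fun e => hxy.ne (hinj hx.1 hy.1 e)
  have := hpar x hx.2 y hy.2
  omega

theorem exists_mem_lt_apply_of_injOn (hF : IsSelective F) (hnp : ∀ n, {n} ∉ F) {f : ℕ → ℕ}
    {B₀ : Set ℕ} (hB₀ : B₀ ∈ F) (hf : InjOn f B₀) :
    ∃ B ∈ F, ∀ i ∈ B, ∀ j ∈ B, i < j → i < f j := by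
  choose N hN using exists_le_apply_of_injOn hf
  obtain ⟨n, hn, hn0, hnN⟩ := exists_strictMono_zero_le_succ N
  obtain ⟨h, hh⟩ := hn.exists_block_index hn0
  have hmono : Monotone h := fun x y hxy =>
    Nat.lt_succ_iff.1 (hn.lt_iff_lt.1 ((hh x).1.trans_lt (hxy.trans_lt (hh y).2)))
  have hfib : ∀ k, (h ⁻¹' {k}).Finite := fun k =>
    (finite_Iio (n (k + 1))).subset fun x (hx : h x = k) => hx ▸ (hh x).2
  obtain ⟨B₁, hB₁, hgap⟩ := hF.exists_mem_add_two_le hnp hmono hfib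
  refine ⟨B₀ ∩ B₁, inter_mem hB₀ hB₁, fun i hi j hj hij => ?_⟩
  have hj_far : N (n (h i + 1)) ≤ j :=
    (hnN _).trans ((hn.monotone (hgap i hi.2 j hj.2 hij)).trans (hh j).1)
  exact (hh i).2.trans_le (hN _ j hj.1 hj_far)

end IsSelective

/-- Every selective non-principal ultrafilter on ℕ is normal. -/
theorem selective_implies_normal (F : Ultrafilter ℕ) (hnp : ∀ n : ℕ, {n} ∉ F)
    (hsel : ∀ f : ℕ → ℕ, (∀ i, f ⁻¹' {i} ∉ F) → ∃ B ∈ F, Set.InjOn f B)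
    (A : ℕ → Set ℕ) (hA : ∀ i, A i ∈ F) :
    ∃ B ∈ F, ∀ i ∈ B, ∀ j ∈ B, i < j → j ∈ A i := by
  obtain ⟨f, hfib, hfA⟩ := F.exists_fiber_notMem_forall_lt_mem hnp hA
  obtain ⟨B₀, hB₀, hinj⟩ := hsel f hfib
  obtain ⟨B, hB, hlt⟩ := IsSelective.exists_mem_lt_apply_of_injOn hsel hnp hB₀ hinj
  exact ⟨B, hB, fun i hi j hj hij => hfA j i (hlt i hi j hj hij)⟩
end

section
/- Every normal ultrafilter is Ramsey: if F is a non-principal ultrafilter on ℕ such that for every family {A_i}_{i∈ℕ} ⊆ F there is B ∈ F with (i, j ∈ B and i < j) → j ∈ A_i, then for every partition of the 2-element subsets of ℕ into two pieces there exists H ∈ F homogeneous for the partition. -/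
open Filter Set

/-! Colour `i` by the colour that `F`-almost every `j > i` gives to the pair `(i, j)`; one colour
class is in `F`. Normality, applied to the sets `{j | (i, j) has that colour}`, then yields a set
in `F` on which every pair `(i, j)` with `i < j` has that colour. -/

theorem Filter.exists_mem_forall_rel_of_eventually_eventually {α : Type*} {f : Filter α}
    {r : α → α → Prop}
    (hnorm : ∀ A : α → Set α, (∀ i, A i ∈ f) → ∃ B ∈ f, ∀ i ∈ B, ∀ j ∈ B, r i j → j ∈ A i)
    {R : α → α → Prop} (hR : ∀ᶠ i in f, ∀ᶠ j in f, R i j) :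
    ∃ H ∈ f, ∀ i ∈ H, ∀ j ∈ H, r i j → R i j := by
  obtain ⟨B, hBf, hB⟩ := hnorm (fun i => {j | (∀ᶠ j in f, R i j) → R i j}) fun i =>
    (em (∀ᶠ j in f, R i j)).elim (fun hi => hi.mono fun _ hj _ => hj)
      fun hi => Eventually.of_forall fun _ h => (hi h).elim
  exact ⟨B ∩ {i | ∀ᶠ j in f, R i j}, inter_mem hBf hR,
    fun i hi j hj hij => hB i hi.1 j hj.1 hij hi.2⟩

theorem normal_implies_ramsey_general (F : Ultrafilter ℕ)
    (hnorm : ∀ A : ℕ → Set ℕ, (∀ i, A i ∈ F) →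
        ∃ B ∈ F, ∀ i ∈ B, ∀ j ∈ B, i < j → j ∈ A i)
    (P : Set (ℕ × ℕ)) :
    ∃ H ∈ F, (∀ i ∈ H, ∀ j ∈ H, i < j → (i, j) ∈ P) ∨
             (∀ i ∈ H, ∀ j ∈ H, i < j → (i, j) ∉ P) := by
  by_cases hP : ∀ᶠ i in (F : Filter ℕ), ∀ᶠ j in (F : Filter ℕ), (i, j) ∈ P
  · obtain ⟨H, hHF, hH⟩ := exists_mem_forall_rel_of_eventually_eventually hnorm hP
    exact ⟨H, hHF, Or.inl hH⟩
  · have hnotP : ∀ᶠ i in (F : Filter ℕ), ∀ᶠ j in (F : Filter ℕ), (i, j) ∉ P :=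
      (Ultrafilter.eventually_not.mpr hP).mono fun _ hi => Ultrafilter.eventually_not.mpr hi
    obtain ⟨H, hHF, hH⟩ := exists_mem_forall_rel_of_eventually_eventually hnorm hnotP
    exact ⟨H, hHF, Or.inr hH⟩

/-- Every normal non-principal ultrafilter on ℕ is Ramsey: for every
partition of the 2-element subsets of ℕ (encoded as pairs `(i, j)` with `i < j`) into
two pieces there is a big homogeneous set. -/
theorem normal_implies_ramsey (F : Ultrafilter ℕ) (hnp : ∀ n : ℕ, {n} ∉ F)
    (hnorm : ∀ A : ℕ → Set ℕ, (∀ i, A i ∈ F) →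
        ∃ B ∈ F, ∀ i ∈ B, ∀ j ∈ B, i < j → j ∈ A i)
    (P : Set (ℕ × ℕ)) :
    ∃ H ∈ F, (∀ i ∈ H, ∀ j ∈ H, i < j → (i, j) ∈ P) ∨
             (∀ i ∈ H, ∀ j ∈ H, i < j → (i, j) ∉ P) :=
  normal_implies_ramsey_general F hnorm P
end

section
/- Every Ramsey ultrafilter is selective: if F is a non-principal ultrafilter on ℕ such that every partition of [ℕ]² into two pieces has a homogeneous set in F, then for every partition {S_i}_{i∈ℕ} of ℕ with all S_i ∉ F there exists B ∈ F intersecting each S_i in at most one point. -/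
/-!
Colour a pair `x < y` by whether `x` and `y` lie in the same piece of the partition, and take a
homogeneous set `H ∈ F`. If all pairs of `H` lie in a common piece, then, the pieces being
disjoint, `H` lies inside the piece of any of its points, which is impossible since pieces are
not in `F`. Hence no two points of `H` share a piece, i.e. `H` is a selector.
-/

open Set

section SameBlock

variable {α ι : Type*} [LinearOrder α] {S : ι → Set α} {H : Set α}

def sameBlock (S : ι → Set α) : Set (α × α) :=
  {p | ∃ i, p.1 ∈ S i ∧ p.2 ∈ S i}

theorem subset_of_forall_lt_mem_sameBlock (hdisj : Pairwise (Function.onFun Disjoint S))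
    (hH : ∀ x ∈ H, ∀ y ∈ H, x < y → (x, y) ∈ sameBlock S) {a : α} {i : ι} (ha : a ∈ H)
    (hai : a ∈ S i) : H ⊆ S i := by
  intro x hx
  rcases lt_trichotomy x a with hlt | rfl | hgt
  · obtain ⟨j, hxj, haj⟩ := hH x hx a ha hlt
    rwa [hdisj.eq (not_disjoint_iff.mpr ⟨a, haj, hai⟩)] at hxj
  · exact hai
  · obtain ⟨j, haj, hxj⟩ := hH a ha x hx hgt
    rwa [hdisj.eq (not_disjoint_iff.mpr ⟨a, haj, hai⟩)] at hxj

theorem inter_subsingleton_of_forall_lt_not_mem_sameBlock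
    (hH : ∀ x ∈ H, ∀ y ∈ H, x < y → (x, y) ∉ sameBlock S) (i : ι) : (H ∩ S i).Subsingleton := by
  intro x hx y hy
  by_contra hne
  rcases lt_or_gt_of_ne hne with hlt | hgt
  · exact hH x hx.1 y hy.1 hlt ⟨i, hx.2, hy.2⟩
  · exact hH y hy.1 x hx.1 hgt ⟨i, hy.2, hx.2⟩

end SameBlock

theorem ramsey_implies_selective_general (F : Ultrafilter ℕ)
    (hram : ∀ P : Set (ℕ × ℕ),
        ∃ H ∈ F, (∀ i ∈ H, ∀ j ∈ H, i < j → (i, j) ∈ P) ∨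
                 (∀ i ∈ H, ∀ j ∈ H, i < j → (i, j) ∉ P))
    (S : ℕ → Set ℕ) (hdisj : Pairwise (Function.onFun Disjoint S))
    (hcov : (⋃ i, S i) = Set.univ) (hsmall : ∀ i, S i ∉ F) :
    ∃ B ∈ F, ∀ i, (B ∩ S i).Subsingleton := by
  obtain ⟨H, hHF, hsame | hsep⟩ := hram (sameBlock S)
  · obtain ⟨a, ha⟩ := F.nonempty_of_mem hHF
    obtain ⟨i, hai⟩ := mem_iUnion.mp (hcov ▸ mem_univ a)
    exact (hsmall i (F.mem_of_superset hHF
      (subset_of_forall_lt_mem_sameBlock hdisj hsame ha hai))).elim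
  · exact ⟨H, hHF, inter_subsingleton_of_forall_lt_not_mem_sameBlock hsep⟩

/-- Every Ramsey non-principal ultrafilter on ℕ is selective: every small
partition of ℕ admits a big set meeting each piece in at most one point. -/
theorem ramsey_implies_selective (F : Ultrafilter ℕ) (hnp : ∀ n : ℕ, {n} ∉ F)
    (hram : ∀ P : Set (ℕ × ℕ),
        ∃ H ∈ F, (∀ i ∈ H, ∀ j ∈ H, i < j → (i, j) ∈ P) ∨
                 (∀ i ∈ H, ∀ j ∈ H, i < j → (i, j) ∉ P))
    (S : ℕ → Set ℕ) (hne : ∀ i, (S i).Nonempty) (hdisj : Pairwise (Function.onFun Disjoint S))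
    (hcov : (⋃ i, S i) = Set.univ) (hsmall : ∀ i, S i ∉ F) :
    ∃ B ∈ F, ∀ i, (B ∩ S i).Subsingleton :=
  ramsey_implies_selective_general F hram S hdisj hcov hsmall
end

section
/- An ultrafilter on ℕ is selective if and only if for every partition of [ℕ]² into two pieces there is a homogeneous set belonging to the ultrafilter. -/
/-!
Selective ⇒ Ramsey: a selective ultrafilter is a P-point (a big set is almost contained in each
member of a sequence of big sets) and a Q-point (some big set meets each block of a partition of ℕ
into finite blocks at most once). Together these diagonalize any sequence `D` of big sets: some big
`B` has `j ∈ D i` whenever `i < j` lie in `B`. For a colouring `P`, take `D i` to be the big one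
of `{j | (i, j) ∈ P}` and its complement, and shrink `B` to the `i` whose colour is the
majority one.

Ramsey ⇒ selective: colour `{i, j}` by whether `f i = f j`; a big set homogeneous for "equal"
would lie in one fibre, so a big homogeneous set is one on which `f` is injective.
-/

open Filter Set

/-- Cutting ℕ into the intervals `[s k, s (k + 1))`, where `s (k + 1)` exceeds `h` on `[0, s k]`,
and indexing each number by its interval. -/
theorem Nat.exists_monotone_index_add_two_le (h : ℕ → ℕ) :
    ∃ idx : ℕ → ℕ, Monotone idx ∧ (∀ m, (idx ⁻¹' Iic m).Finite) ∧
      ∀ i j, idx i + 2 ≤ idx j → h i ≤ j := by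
  set H : ℕ → ℕ := fun n => n + 1 + ∑ m ∈ Finset.range (n + 1), h m
  have hH_mono : StrictMono H := strictMono_nat_of_lt_succ fun n => by
    simp only [H, Finset.sum_range_succ _ (n + 1)]; omega
  have lt_H : ∀ n, n < H n := fun n => by simp only [H]; omega
  have h_le_H : ∀ n, h n ≤ H n := fun n => by
    have := Finset.single_le_sum (fun m _ => Nat.zero_le (h m)) (Finset.self_mem_range_succ n)
    simp only [H]; omega
  set s : ℕ → ℕ := fun k => H^[k] 0
  have hs_succ : ∀ k, s (k + 1) = H (s k) := fun k => Function.iterate_succ_apply' H k 0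
  have hs_mono : StrictMono s := strictMono_nat_of_lt_succ fun k => by
    rw [hs_succ]; exact lt_H _
  have hex : ∀ j, ∃ k, j < s (k + 1) := fun j =>
    ⟨j, (hs_mono.id_le j).trans_lt (hs_mono j.lt_succ_self)⟩
  refine ⟨fun j => Nat.find (hex j), fun i j hij => Nat.find_mono fun k hk => hij.trans_lt hk,
    fun m => (finite_Iio (s (m + 1))).subset fun j hj => ?_, fun i j hij => ?_⟩
  · exact (Nat.find_spec (hex j)).trans_le (hs_mono.monotone (Nat.succ_le_succ hj))
  · dsimp only at hij
    have hs_find_le : s (Nat.find (hex j)) ≤ j := by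
      obtain ⟨k, hk⟩ := Nat.exists_eq_add_of_le' (show 1 ≤ Nat.find (hex j) by omega)
      rw [hk]; exact not_lt.1 (Nat.find_min (hex j) (by omega))
    calc h i ≤ H i := h_le_H i
      _ ≤ H (s (Nat.find (hex i) + 1)) := hH_mono.monotone (Nat.find_spec (hex i)).le
      _ = s (Nat.find (hex i) + 2) := (hs_succ _).symm
      _ ≤ s (Nat.find (hex j)) := hs_mono.monotone hij
      _ ≤ j := hs_find_le

namespace Ultrafilter

def IsSelective (F : Ultrafilter ℕ) : Prop :=
  ∀ f : ℕ → ℕ, (∀ i, f ⁻¹' {i} ∉ F) → ∃ B ∈ F, InjOn f B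

def IsRamsey (F : Ultrafilter ℕ) : Prop :=
  ∀ P : Set (ℕ × ℕ), ∃ H ∈ F, (∀ i ∈ H, ∀ j ∈ H, i < j → (i, j) ∈ P) ∨
    (∀ i ∈ H, ∀ j ∈ H, i < j → (i, j) ∉ P)

variable {F : Ultrafilter ℕ}

namespace IsSelective

theorem exists_mem_injOn_or_eqOn_const (hF : F.IsSelective) (f : ℕ → ℕ) :
    ∃ B ∈ F, InjOn f B ∨ ∃ m, ∀ j ∈ B, f j = m := by
  by_cases h : ∃ m, f ⁻¹' {m} ∈ F
  · obtain ⟨m, hm⟩ := h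
    exact ⟨_, hm, Or.inr ⟨m, fun _ hj => hj⟩⟩
  · obtain ⟨B, hB, hinj⟩ := hF f fun m hm => h ⟨m, hm⟩
    exact ⟨B, hB, Or.inl hinj⟩

theorem exists_mem_injOn_of_finite_fibers (hF : F.IsSelective) (hnp : ∀ n : ℕ, {n} ∉ F) (f : ℕ → ℕ)
    (hf : ∀ m, (f ⁻¹' {m}).Finite) : ∃ B ∈ F, InjOn f B :=
  hF f fun m hm => by
    obtain ⟨x, -, rfl⟩ := eq_pure_of_finite_mem (hf m) hm
    exact hnp x (mem_pure.2 rfl)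

theorem exists_mem_forall_diff_finite (hF : F.IsSelective) (D : ℕ → Set ℕ) (hD : ∀ n, D n ∈ F) :
    ∃ B ∈ F, ∀ n, (B \ D n).Finite := by
  classical
  let f : ℕ → ℕ := fun j => if h : ∃ n, j ∉ D n then Nat.find h + 1 else 0
  obtain ⟨B, hB, hinj | ⟨m, hm⟩⟩ := hF.exists_mem_injOn_or_eqOn_const f
  · refine ⟨B, hB, fun n => Finite.of_finite_image ((finite_Iic (n + 1)).subset ?_)
      (hinj.mono sdiff_subset)⟩
    rintro _ ⟨j, ⟨-, hj⟩, rfl⟩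
    have h : ∃ n, j ∉ D n := ⟨n, hj⟩
    simpa only [f, dif_pos h, mem_Iic, add_le_add_iff_right] using Nat.find_min' h hj
  · cases m with
    | zero =>
      refine ⟨B, hB, fun n => (finite_empty).subset fun j hj => ?_⟩
      have h : ¬∃ n, j ∉ D n := fun h => by simpa [f, h] using hm j hj.1
      exact h ⟨n, hj.2⟩
    | succ m =>
      obtain ⟨j, hjB, hjD⟩ := F.nonempty_of_mem (inter_mem hB (hD m))
      have h : ∃ n, j ∉ D n := by by_contra h; simpa [f, h] using hm j hjB
      have hfind : Nat.find h = m := by simpa [f, h] using hm j hjB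
      exact absurd (hfind ▸ Nat.find_spec h) (not_not.2 hjD)

theorem exists_mem_forall_lt_mem (hF : F.IsSelective) (hnp : ∀ n : ℕ, {n} ∉ F)
    (D : ℕ → Set ℕ) (hD : ∀ n, D n ∈ F) : ∃ B ∈ F, ∀ i ∈ B, ∀ j ∈ B, i < j → j ∈ D i := by
  obtain ⟨B₀, hB₀, hfin⟩ := hF.exists_mem_forall_diff_finite D hD
  choose h hh using fun n => (hfin n).bddAbove
  obtain ⟨idx, hmono, hfib, hsep⟩ := Nat.exists_monotone_index_add_two_le (h · + 1)
  -- Injectivity of both `idx / 2` and `(idx + 1) / 2` keeps the blocks of `i < j` two apart.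
  have half_fibers : ∀ c ≤ 1, ∀ m, ((fun j => (idx j + c) / 2) ⁻¹' {m}).Finite :=
    fun c hc m => (hfib (2 * m + 1)).subset fun j hj => by
      simp only [mem_preimage, mem_singleton_iff, mem_Iic] at hj ⊢; omega
  obtain ⟨B₁, hB₁, hinj₁⟩ := hF.exists_mem_injOn_of_finite_fibers hnp _ (half_fibers 0 zero_le_one)
  obtain ⟨B₂, hB₂, hinj₂⟩ := hF.exists_mem_injOn_of_finite_fibers hnp _ (half_fibers 1 le_rfl)
  refine ⟨B₀ ∩ B₁ ∩ B₂, inter_mem (inter_mem hB₀ hB₁) hB₂, ?_⟩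
  rintro i ⟨⟨-, hi₁⟩, hi₂⟩ j ⟨⟨hj₀, hj₁⟩, hj₂⟩ hij
  have h₁ : (idx i + 0) / 2 ≠ (idx j + 0) / 2 := fun he => hij.ne (hinj₁ hi₁ hj₁ he)
  have h₂ : (idx i + 1) / 2 ≠ (idx j + 1) / 2 := fun he => hij.ne (hinj₂ hi₂ hj₂ he)
  have hle := hmono hij.le
  have hhj : h i + 1 ≤ j := hsep i j (by omega)
  by_contra hjD
  exact absurd (hh i ⟨hj₀, hjD⟩) (by omega)

theorem isRamsey (hF : F.IsSelective) (hnp : ∀ n : ℕ, {n} ∉ F) : F.IsRamsey := by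
  intro P
  let C : Set ℕ := {i | {j | (i, j) ∈ P} ∈ F}
  let D : ℕ → Set ℕ := fun i => {j | (i, j) ∈ P ↔ i ∈ C}
  have hD : ∀ i, D i ∈ F := fun i => by
    by_cases hi : i ∈ C
    · exact mem_of_superset hi fun j hj => iff_of_true hj hi
    · exact mem_of_superset (compl_mem_iff_notMem.2 hi) fun j hj => iff_of_false hj hi
  obtain ⟨B, hB, hdiag⟩ := hF.exists_mem_forall_lt_mem hnp D hD
  rcases F.mem_or_compl_mem C with hC | hC
  · exact ⟨B ∩ C, inter_mem hB hC,
      Or.inl fun i hi j hj hij => (hdiag i hi.1 j hj.1 hij).2 hi.2⟩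
  · exact ⟨B ∩ Cᶜ, inter_mem hB hC,
      Or.inr fun i hi j hj hij => mt (hdiag i hi.1 j hj.1 hij).1 hi.2⟩

end IsSelective

theorem IsRamsey.isSelective (hF : F.IsRamsey) : F.IsSelective := by
  intro f hf
  obtain ⟨H, hH, hconst | hinj⟩ := hF {p | f p.1 = f p.2}
  · obtain ⟨x, hx⟩ := F.nonempty_of_mem hH
    refine absurd (mem_of_superset hH fun y hy => ?_) (hf (f x))
    rcases lt_trichotomy y x with hyx | rfl | hxy
    · exact hconst y hy x hx hyx
    · rfl
    · exact (hconst x hx y hy hxy).symm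
  · refine ⟨H, hH, fun x hx y hy hfxy => ?_⟩
    rcases lt_trichotomy x y with hxy | hxy | hyx
    · exact absurd hfxy (hinj x hx y hy hxy)
    · exact hxy
    · exact absurd hfxy.symm (hinj y hy x hx hyx)

end Ultrafilter

/-- A non-principal ultrafilter on ℕ is selective if and only if every
partition of the 2-element subsets of ℕ into two pieces has a big homogeneous set. -/
theorem selective_iff_ramsey (F : Ultrafilter ℕ) (hnp : ∀ n : ℕ, {n} ∉ F) :
    (∀ f : ℕ → ℕ, (∀ i, f ⁻¹' {i} ∉ F) → ∃ B ∈ F, Set.InjOn f B) ↔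
    (∀ P : Set (ℕ × ℕ),
        ∃ H ∈ F, (∀ i ∈ H, ∀ j ∈ H, i < j → (i, j) ∈ P) ∨
                 (∀ i ∈ H, ∀ j ∈ H, i < j → (i, j) ∉ P)) :=
  ⟨fun hF => Ultrafilter.IsSelective.isRamsey hF hnp, Ultrafilter.IsRamsey.isSelective⟩
end

section
/- Let F be a selective ultrafilter and x ∈ ℚ* finite or infinitesimal. If (x_n)_{n∈K} and (x_n)_{n∈L} are Cauchy subsequences with K, L ∈ F, then they are equivalent: the difference of the k-th terms tends to 0 as k → ∞. -/
/-!
Two Cauchy sequences that take a common value at arbitrarily late pairs of indices are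
equivalent. For subsequences of one sequence `x` indexed by `K, L ∈ F`, the common values
are supplied by `K ∩ L ∈ F`, which is infinite because `F` is non-principal.
-/

open Filter Set Topology

theorem Ultrafilter.infinite_of_mem {α : Type*} {F : Ultrafilter α} (hnp : ∀ a : α, {a} ∉ F)
    {s : Set α} (hs : s ∈ F) : s.Infinite := by
  intro hfin
  obtain ⟨a, -, rfl⟩ := Ultrafilter.eq_pure_of_finite_mem hfin hs
  exact hnp a (Ultrafilter.mem_pure.2 rfl)

theorem StrictMono.exists_ge_eq_of_infinite_inter_range {e e' : ℕ → ℕ} (he : StrictMono e)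
    (he' : StrictMono e') (h : (range e ∩ range e').Infinite) (N : ℕ) :
    ∃ a ≥ N, ∃ b ≥ N, e a = e' b := by
  obtain ⟨m, ⟨⟨a, rfl⟩, ⟨b, hb⟩⟩, hm⟩ := h.exists_gt (max (e N) (e' N))
  refine ⟨a, (he.lt_iff_lt.1 (lt_of_le_of_lt (le_max_left _ _) hm)).le,
    b, (he'.lt_iff_lt.1 ?_).le, hb.symm⟩
  rw [hb]
  exact lt_of_le_of_lt (le_max_right _ _) hm

namespace CauSeq

variable {α β : Type*} [Field α] [LinearOrder α] [IsStrictOrderedRing α] [Ring β]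
  {abv : β → α} [IsAbsoluteValue abv]

theorem equiv_of_forall_exists_ge_eq (f g : CauSeq β abv)
    (h : ∀ N, ∃ a ≥ N, ∃ b ≥ N, f a = g b) : f ≈ g := by
  intro ε hε
  obtain ⟨i, hi⟩ := f.cauchy₂ (half_pos hε)
  obtain ⟨j, hj⟩ := g.cauchy₂ (half_pos hε)
  obtain ⟨a, ha, b, hb, hab⟩ := h (max i j)
  refine ⟨max i j, fun k hk => ?_⟩
  have hki : k ≥ i := le_of_max_le_left hk
  have hkj : k ≥ j := le_of_max_le_right hk
  calc abv ((f - g) k) = abv (f k - g k) := by rw [sub_apply]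
    _ ≤ abv (f k - f a) + abv (g b - g k) := by rw [← hab]; exact IsAbsoluteValue.abv_sub_le abv _ _ _
    _ < ε / 2 + ε / 2 :=
        add_lt_add (hi k hki a (le_of_max_le_left ha)) (hj b (le_of_max_le_right hb) k hkj)
    _ = ε := add_halves ε

end CauSeq

theorem Rat.tendsto_sub_of_cauSeq_equiv {f g : CauSeq ℚ abs} (hfg : f ≈ g) :
    Tendsto (fun k => f k - g k) atTop (𝓝 0) := by
  refine LinearOrderedAddCommGroup.tendsto_nhds.2 fun ε hε => eventually_atTop.2 ?_
  simpa only [CauSeq.sub_apply, sub_zero] using hfg ε hε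

theorem cauchy_big_subsequences_equivalent_general
    (F : Ultrafilter ℕ) (hnp : ∀ n : ℕ, {n} ∉ F)
    (x : ℕ → ℚ)
    (K L : Set ℕ) (hK : K ∈ F) (hL : L ∈ F)
    (eK eL : ℕ → ℕ) (heK : StrictMono eK) (hrK : Set.range eK = K)
    (heL : StrictMono eL) (hrL : Set.range eL = L)
    (hcK : IsCauSeq abs (fun k => x (eK k))) (hcL : IsCauSeq abs (fun k => x (eL k))) :
    Tendsto (fun k => x (eK k) - x (eL k)) atTop (𝓝 (0 : ℚ)) := by
  have hKL : (range eK ∩ range eL).Infinite := by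
    rw [hrK, hrL]
    exact Ultrafilter.infinite_of_mem hnp (inter_mem hK hL)
  have hcommon (N : ℕ) : ∃ a ≥ N, ∃ b ≥ N, x (eK a) = x (eL b) := by
    obtain ⟨a, ha, b, hb, hab⟩ := heK.exists_ge_eq_of_infinite_inter_range heL hKL N
    exact ⟨a, ha, b, hb, congrArg x hab⟩
  exact Rat.tendsto_sub_of_cauSeq_equiv
    (CauSeq.equiv_of_forall_exists_ge_eq ⟨_, hcK⟩ ⟨_, hcL⟩ hcommon)

/-- For `F` selective and `x` finite or infinitesimal, any two big Cauchy
subsequences of a representative are equivalent: their termwise difference tends to 0. -/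
theorem cauchy_big_subsequences_equivalent
    (F : Ultrafilter ℕ) (hnp : ∀ n : ℕ, {n} ∉ F)
    (hsel : ∀ f : ℕ → ℕ, (∀ i, f ⁻¹' {i} ∉ F) → ∃ B ∈ F, Set.InjOn f B)
    (x : ℕ → ℚ)
    (hfin : ∃ q : ℚ, |(x : Germ (F : Filter ℕ) ℚ)| ≤ (q : Germ (F : Filter ℕ) ℚ))
    (K L : Set ℕ) (hK : K ∈ F) (hL : L ∈ F)
    (eK eL : ℕ → ℕ) (heK : StrictMono eK) (hrK : Set.range eK = K)
    (heL : StrictMono eL) (hrL : Set.range eL = L)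
    (hcK : IsCauSeq abs (fun k => x (eK k))) (hcL : IsCauSeq abs (fun k => x (eL k))) :
    Tendsto (fun k => x (eK k) - x (eL k)) atTop (𝓝 (0 : ℚ)) :=
  cauchy_big_subsequences_equivalent_general F hnp x K L hK hL eK eL heK hrK heL hrL hcK hcL
end

section
/- In ℚ* over a non-principal ultrafilter F, if x is represented by a strictly increasing sequence on a set in F and also by a strictly decreasing sequence on a set in F, then we have a contradiction; i.e., no element is simultaneously 'left' and 'right': the cases strictly increasing, strictly decreasing, and stationary big subsequences are mutually exclusive. -/
open Filter Set

/-- An element of `ℚ*` is *left* if some representative is strictly increasing on a big set. -/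
def IsLeft (F : Ultrafilter ℕ) (z : Germ (F : Filter ℕ) ℚ) : Prop :=
  ∃ x : ℕ → ℚ, (x : Germ (F : Filter ℕ) ℚ) = z ∧ ∃ B ∈ F, StrictMonoOn x B

/-- An element of `ℚ*` is *right* if some representative is strictly decreasing on a big set. -/
def IsRight (F : Ultrafilter ℕ) (z : Germ (F : Filter ℕ) ℚ) : Prop :=
  ∃ x : ℕ → ℚ, (x : Germ (F : Filter ℕ) ℚ) = z ∧ ∃ B ∈ F, StrictAntiOn x B

/-- An element of `ℚ*` is *stationary* if some representative is constant on a big set. -/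
def IsStationaryQ (F : Ultrafilter ℕ) (z : Germ (F : Filter ℕ) ℚ) : Prop :=
  ∃ x : ℕ → ℚ, (x : Germ (F : Filter ℕ) ℚ) = z ∧
    ∃ B ∈ F, ∀ i ∈ B, ∀ j ∈ B, x i = x j

/-! Two representatives of the same element agree on a big set, and every big set of a
non-principal ultrafilter has two points `i < j`; there a strictly increasing representative
has `x i < x j`, whereas a non-increasing one has `x j ≤ x i`. -/

namespace Ultrafilter

variable {α : Type*} {F : Ultrafilter α}

theorem nontrivial_of_mem (hnp : ∀ a, {a} ∉ F) {s : Set α} (hs : s ∈ F) : s.Nontrivial := by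
  obtain ⟨a, ha⟩ := F.nonempty_of_mem hs
  obtain ⟨b, hb, hba⟩ := F.nonempty_of_mem (F.inter_sets hs (compl_mem_iff_notMem.2 (hnp a)))
  exact ⟨a, ha, b, hb, Ne.symm hba⟩

theorem not_strictMonoOn_of_antitoneOn_of_eventuallyEq [LinearOrder α] {β : Type*} [Preorder β]
    (hnp : ∀ a, {a} ∉ F) {x y : α → β} (hxy : x =ᶠ[F] y) {B C : Set α} (hB : B ∈ F)
    (hC : C ∈ F) (hy : AntitoneOn y C) : ¬ StrictMonoOn x B := by
  intro hx
  obtain ⟨i, ⟨⟨hiB, hiC⟩, hxyi⟩, j, ⟨⟨hjB, hjC⟩, hxyj⟩, hij⟩ :=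
    (nontrivial_of_mem hnp (F.inter_sets (F.inter_sets hB hC) hxy)).exists_lt
  exact lt_irrefl (x i) <| calc
    x i < x j := hx hiB hjB hij
    _ = y j := hxyj
    _ ≤ y i := hy hiC hjC hij.le
    _ = x i := (hxyi : x i = y i).symm

end Ultrafilter

/-- The cases of a strictly increasing, strictly decreasing, or stationary
big representing subsequence are mutually exclusive. -/
theorem left_right_stationary_mutually_exclusive
    (F : Ultrafilter ℕ) (hnp : ∀ n : ℕ, {n} ∉ F) (z : Germ (F : Filter ℕ) ℚ) :
    ¬ (IsLeft F z ∧ IsRight F z) ∧ ¬ (IsLeft F z ∧ IsStationaryQ F z) ∧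
    ¬ (IsRight F z ∧ IsStationaryQ F z) := by
  refine ⟨?_, ?_, ?_⟩
  · rintro ⟨⟨x, rfl, B, hB, hx⟩, ⟨y, hxy, C, hC, hy⟩⟩
    exact F.not_strictMonoOn_of_antitoneOn_of_eventuallyEq hnp (Germ.coe_eq.mp hxy.symm) hB hC
      hy.antitoneOn hx
  · rintro ⟨⟨x, rfl, B, hB, hx⟩, ⟨y, hxy, C, hC, hy⟩⟩
    exact F.not_strictMonoOn_of_antitoneOn_of_eventuallyEq hnp (Germ.coe_eq.mp hxy.symm) hB hC
      (fun i hi j hj _ => (hy i hi j hj).ge) hx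
  · rintro ⟨⟨x, rfl, B, hB, hx⟩, ⟨y, hxy, C, hC, hy⟩⟩
    exact F.not_strictMonoOn_of_antitoneOn_of_eventuallyEq hnp
      ((Germ.coe_eq.mp hxy.symm).fun_comp OrderDual.toDual) hB hC
      (fun i hi j hj _ => (hy j hj i hi).ge) hx.dual_right
end

section
/- Let F be a selective ultrafilter on ℕ. The map ν : ℚ*_fin → ℝ sending x to the limit of a Cauchy big subsequence of a representative of x is well-defined (independent of choices) and is a surjective ring homomorphism with kernel 𝕀. -/
/-!
Along an ultrafilter every bounded real sequence converges, because `Icc (-C) C` is compact, and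
eventually equal sequences have the same limit. So `ν x` can be taken to be the `F`-limit of any
representative of `x`; limits along `F` respect sums and products and vanish exactly on the
infinitesimals. A non-principal ultrafilter refines the cofinite filter, so the `atTop`-limit of
the increasing enumeration of a set `B ∈ F` is the `F`-limit as well.
-/

open Filter Set Topology

theorem Ultrafilter.le_cofinite_of_forall_singleton_notMem {α : Type*} {F : Ultrafilter α}
    (h : ∀ a, {a} ∉ F) : (F : Filter α) ≤ cofinite :=
  F.le_cofinite_or_eq_pure.resolve_right fun ⟨a, ha⟩ => h a (ha ▸ mem_pure.2 rfl)

theorem Filter.Tendsto.of_comp_injective {α β γ : Type*} {l : Filter α} {l' : Filter γ}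
    {e : β → α} {f : α → γ} (he : Function.Injective e) (hl : l ≤ cofinite) (hrange : range e ∈ l)
    (h : Tendsto (f ∘ e) cofinite l') : Tendsto f l l' := by
  have hle : l ≤ map e cofinite := by
    rw [← he.comap_cofinite_eq, map_comap]
    exact le_inf hl (le_principal_iff.2 hrange)
  exact (tendsto_map'_iff.2 h).mono_left hle

theorem exists_tendsto_of_eventually_abs_le {α : Type*} (F : Ultrafilter α) {g : α → ℝ} {C : ℝ}
    (h : ∀ᶠ n in (F : Filter α), |g n| ≤ C) : ∃ r, Tendsto g F (𝓝 r) := by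
  have hmem : (F.map g : Filter ℝ) ≤ 𝓟 (Icc (-C) C) :=
    le_principal_iff.2 (h.mono fun _ => abs_le.1)
  obtain ⟨r, -, hr⟩ := isCompact_Icc.ultrafilter_le_nhds _ hmem
  exact ⟨r, hr⟩

theorem tendsto_ratCast_nhds_zero_iff {α : Type*} {l : Filter α} {g : α → ℚ} :
    Tendsto (fun n => (g n : ℝ)) l (𝓝 0) ↔ ∀ q : ℚ, 0 < q → ∀ᶠ n in l, |g n| < q := by
  simp only [Metric.tendsto_nhds, Real.dist_eq, sub_zero]
  constructor
  · intro h q hq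
    exact (h q (by exact_mod_cast hq)).mono fun n hn => by exact_mod_cast hn
  · intro h ε hε
    obtain ⟨q, hq, hqε⟩ := exists_rat_btwn hε
    exact (h q (by exact_mod_cast hq)).mono fun n hn =>
      lt_trans (by exact_mod_cast hn) hqε

theorem exists_pos_rat_eventually_abs_le_of_tendsto {α : Type*} {l : Filter α} {g : α → ℚ} {r : ℝ}
    (h : Tendsto (fun n => (g n : ℝ)) l (𝓝 r)) : ∃ q : ℚ, 0 < q ∧ ∀ᶠ n in l, |g n| ≤ q := by
  obtain ⟨q, hq⟩ := exists_rat_gt (|r| + 1)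
  refine ⟨q, by exact_mod_cast (abs_nonneg r).trans_lt ((lt_add_one _).trans hq), ?_⟩
  filter_upwards [Metric.tendsto_nhds.1 h 1 one_pos] with n hn
  have : |(g n : ℝ)| ≤ q := by
    rw [Real.dist_eq] at hn
    linarith [abs_sub_abs_le_abs_sub (g n : ℝ) r]
  exact_mod_cast this

namespace Filter.Germ

variable {α : Type*}

theorem ratCast_eq_coe_const {F : Ultrafilter α} (q : ℚ) :
    (q : Germ (F : Filter α) ℚ) = ((fun _ => q : α → ℚ) : Germ (F : Filter α) ℚ) :=
  (map_ratCast ((coeRingHom (F : Filter α)).comp (Pi.constRingHom α ℚ)) q).symm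

theorem abs_coe_le_ratCast_iff {F : Ultrafilter α} (f : α → ℚ) (q : ℚ) :
    |(f : Germ (F : Filter α) ℚ)| ≤ (q : Germ (F : Filter α) ℚ) ↔
      ∀ᶠ n in (F : Filter α), |f n| ≤ q := by
  rw [abs_def, ratCast_eq_coe_const]; exact coe_le

theorem abs_coe_lt_ratCast_iff {F : Ultrafilter α} (f : α → ℚ) (q : ℚ) :
    |(f : Germ (F : Filter α) ℚ)| < (q : Germ (F : Filter α) ℚ) ↔
      ∀ᶠ n in (F : Filter α), |f n| < q := by
  rw [abs_def, ratCast_eq_coe_const]; exact coe_lt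

/-- The limit in `ℝ` of a rational germ; a junk value when there is none. -/
noncomputable def realLimit {l : Filter α} (x : Germ l ℚ) : ℝ :=
  x.liftOn (fun f => limUnder l fun n => (f n : ℝ)) fun _ _ h =>
    congrArg lim (map_congr (h.fun_comp Rat.cast))

theorem realLimit_coe_eq {l : Filter α} [l.NeBot] {f : α → ℚ} {r : ℝ}
    (h : Tendsto (fun n => (f n : ℝ)) l (𝓝 r)) : realLimit (f : Germ l ℚ) = r :=
  h.limUnder_eq

section Ultrafilter

variable {F : Ultrafilter α}

theorem tendsto_realLimit {f : α → ℚ} {q : ℚ} (h : |(f : Germ (F : Filter α) ℚ)| ≤ q) :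
    Tendsto (fun n => (f n : ℝ)) F (𝓝 (realLimit (f : Germ (F : Filter α) ℚ))) := by
  rw [abs_coe_le_ratCast_iff] at h
  obtain ⟨r, hr⟩ := exists_tendsto_of_eventually_abs_le F (g := fun n => (f n : ℝ)) (C := q)
    (h.mono fun n hn => by exact_mod_cast hn)
  rwa [realLimit_coe_eq hr]

theorem realLimit_add {x y : Germ (F : Filter α) ℚ} (hx : ∃ q : ℚ, |x| ≤ q)
    (hy : ∃ q : ℚ, |y| ≤ q) : realLimit (x + y) = realLimit x + realLimit y := by
  induction x using Germ.inductionOn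
  induction y using Germ.inductionOn
  obtain ⟨p, hp⟩ := hx
  obtain ⟨q, hq⟩ := hy
  refine realLimit_coe_eq (f := _ + _) ?_
  simpa using (tendsto_realLimit hp).add (tendsto_realLimit hq)

theorem realLimit_mul {x y : Germ (F : Filter α) ℚ} (hx : ∃ q : ℚ, |x| ≤ q)
    (hy : ∃ q : ℚ, |y| ≤ q) : realLimit (x * y) = realLimit x * realLimit y := by
  induction x using Germ.inductionOn
  induction y using Germ.inductionOn
  obtain ⟨p, hp⟩ := hx
  obtain ⟨q, hq⟩ := hy
  refine realLimit_coe_eq (f := _ * _) ?_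
  simpa using (tendsto_realLimit hp).mul (tendsto_realLimit hq)

theorem realLimit_eq_zero_iff {x : Germ (F : Filter α) ℚ} (hx : ∃ q : ℚ, |x| ≤ q) :
    realLimit x = 0 ↔ ∀ q : ℚ, 0 < q → |x| < q := by
  induction x using Germ.inductionOn with | h f => ?_
  obtain ⟨p, hp⟩ := hx
  simp only [abs_coe_lt_ratCast_iff, ← tendsto_ratCast_nhds_zero_iff]
  exact ⟨fun h => h ▸ tendsto_realLimit hp, realLimit_coe_eq⟩

noncomputable def realLimitHom (R : Subring (Germ (F : Filter α) ℚ))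
    (hR : ∀ x ∈ R, ∃ q : ℚ, |x| ≤ q) : R →+* ℝ where
  toFun x := realLimit (x : Germ (F : Filter α) ℚ)
  map_one' := realLimit_coe_eq (f := 1) (by simp)
  map_mul' x y := realLimit_mul (hR x x.2) (hR y y.2)
  map_zero' := realLimit_coe_eq (f := 0) (by simp)
  map_add' x y := realLimit_add (hR x x.2) (hR y y.2)

end Ultrafilter

end Filter.Germ

open Filter.Germ in
theorem value_map_exists_general
    (F : Ultrafilter ℕ) (hnp : ∀ n : ℕ, {n} ∉ F)
    (R : Subring (Germ (F : Filter ℕ) ℚ))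
    (hR : (R : Set (Germ (F : Filter ℕ) ℚ)) =
      {x | ∃ q : ℚ, 0 < q ∧ |x| ≤ (q : Germ (F : Filter ℕ) ℚ)}) :
    ∃ ν : R →+* ℝ, Function.Surjective ν ∧
      (∀ x : R, ν x = 0 ↔
        ∀ q : ℚ, 0 < q → |(x : Germ (F : Filter ℕ) ℚ)| < (q : Germ (F : Filter ℕ) ℚ)) ∧
      (∀ x : R, ∀ rep : ℕ → ℚ, (rep : Germ (F : Filter ℕ) ℚ) = (x : Germ (F : Filter ℕ) ℚ) →
        ∀ B ∈ F, ∀ e : ℕ → ℕ, StrictMono e → Set.range e = B →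
        ∀ r : ℝ, Tendsto (fun k => ((rep (e k) : ℝ))) atTop (𝓝 r) → ν x = r) := by
  have hbdd : ∀ x ∈ R, ∃ q : ℚ, |x| ≤ q := fun x hx => by
    rw [← SetLike.mem_coe, hR] at hx
    obtain ⟨q, -, hq⟩ := hx
    exact ⟨q, hq⟩
  have hF : (F : Filter ℕ) ≤ cofinite := F.le_cofinite_of_forall_singleton_notMem hnp
  refine ⟨realLimitHom R hbdd, fun r => ?_, fun x => realLimit_eq_zero_iff (hbdd x x.2), ?_⟩
  · obtain ⟨u, -, -, hu⟩ := Real.exists_seq_rat_strictMono_tendsto r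
    have hu' := hu.mono_left (hF.trans_eq Nat.cofinite_eq_atTop)
    obtain ⟨q, hq, hle⟩ := exists_pos_rat_eventually_abs_le_of_tendsto hu'
    have hmem : (u : Germ (F : Filter ℕ) ℚ) ∈ R := by
      rw [← SetLike.mem_coe, hR]
      exact ⟨q, hq, (abs_coe_le_ratCast_iff u q).2 hle⟩
    exact ⟨⟨u, hmem⟩, realLimit_coe_eq hu'⟩
  · rintro x f hf B hB e he rfl r hr
    change realLimit (x : Germ (F : Filter ℕ) ℚ) = r
    rw [← hf]
    exact realLimit_coe_eq <|
      Tendsto.of_comp_injective he.injective hF hB (Nat.cofinite_eq_atTop ▸ hr)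

/-- For a selective ultrafilter `F`, the value map `ν` on the subring of
finite-or-infinitesimal hyperrationals — sending `x` to the limit of any convergent big
subsequence of any representative — is well defined and is a surjective ring homomorphism
onto ℝ with kernel the ideal of infinitesimals. -/
theorem value_map_exists
    (F : Ultrafilter ℕ) (hnp : ∀ n : ℕ, {n} ∉ F)
    (hsel : ∀ f : ℕ → ℕ, (∀ i, f ⁻¹' {i} ∉ F) → ∃ B ∈ F, Set.InjOn f B)
    (R : Subring (Germ (F : Filter ℕ) ℚ))
    (hR : (R : Set (Germ (F : Filter ℕ) ℚ)) =
      {x | ∃ q : ℚ, 0 < q ∧ |x| ≤ (q : Germ (F : Filter ℕ) ℚ)}) :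
    ∃ ν : R →+* ℝ, Function.Surjective ν ∧
      (∀ x : R, ν x = 0 ↔
        ∀ q : ℚ, 0 < q → |(x : Germ (F : Filter ℕ) ℚ)| < (q : Germ (F : Filter ℕ) ℚ)) ∧
      (∀ x : R, ∀ rep : ℕ → ℚ, (rep : Germ (F : Filter ℕ) ℚ) = (x : Germ (F : Filter ℕ) ℚ) →
        ∀ B ∈ F, ∀ e : ℕ → ℕ, StrictMono e → Set.range e = B →
        ∀ r : ℝ, Tendsto (fun k => ((rep (e k) : ℝ))) atTop (𝓝 r) → ν x = r) :=
  value_map_exists_general F hnp R hR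
end

section
/- Let F be a selective ultrafilter on ℕ. Then the quotient ring ℚ*_fin / 𝕀 is isomorphic as a field to ℝ. -/
/-!
The standard part of a finite hyperrational is the real number infinitely close to it; on the
finite elements it is a ring homomorphism to `ℝ` whose kernel consists of the infinitesimals.
It is onto because `F` is non-principal, hence refines the cofinite filter: the germ of a
rational sequence converging to `r` has standard part `r`.
-/

open Filter Topology

namespace ArchimedeanClass

variable {K : Type*} [LinearOrder K] [Field K] [IsOrderedRing K] {x : K}

theorem mk_nonneg_iff_exists_abs_le_ratCast : 0 ≤ mk x ↔ ∃ q : ℚ, 0 < q ∧ |x| ≤ q := by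
  rw [← mk_one, mk_le_mk_iff_ratCast, abs_one]
  refine ⟨fun ⟨q, hq, h⟩ ↦ ⟨q⁻¹, inv_pos.2 hq, ?_⟩, fun ⟨q, hq, h⟩ ↦ ⟨q⁻¹, inv_pos.2 hq, ?_⟩⟩
  · have hq' : (0 : K) < q := by exact_mod_cast hq
    rwa [Rat.cast_inv, ← one_div, le_div_iff₀' hq']
  · have hq' : (0 : K) < q := by exact_mod_cast hq
    rwa [Rat.cast_inv, ← one_div, div_mul_eq_mul_div, div_le_one hq', one_mul]

theorem mk_pos_iff_forall_abs_lt_ratCast : 0 < mk x ↔ ∀ q : ℚ, 0 < q → |x| < q := by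
  rw [← mk_one, ← not_le, mk_le_mk_iff_ratCast, abs_one]
  simp

theorem stdPart_eq_of_forall_ratCast {r : ℝ} (hx : 0 ≤ mk x) (hl : ∀ p : ℚ, p < r → (p : K) ≤ x)
    (hr : ∀ p : ℚ, r < p → x ≤ p) : stdPart x = r := by
  have hmono := stdPart_monotoneOn (K := K)
  refine le_antisymm (le_of_forall_lt_rat_imp_le fun p hp ↦ ?_)
    (le_of_forall_rat_lt_imp_le fun p hp ↦ ?_)
  · simpa using hmono hx (mk_ratCast_nonneg p) (hr p hp)
  · simpa using hmono (mk_ratCast_nonneg p) hx (hl p hp)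

noncomputable def stdPartRingHom (R : Subring K) (hR : ∀ x ∈ R, 0 ≤ mk x) : R →+* ℝ where
  toFun x := stdPart (x : K)
  map_one' := stdPart_one
  map_mul' x y := stdPart_mul (hR _ x.2) (hR _ y.2)
  map_zero' := stdPart_zero
  map_add' x y := stdPart_add (hR _ x.2) (hR _ y.2)

theorem mem_ker_stdPartRingHom {R : Subring K} {hR : ∀ x ∈ R, 0 ≤ mk x} {x : R} :
    x ∈ RingHom.ker (stdPartRingHom R hR) ↔ 0 < mk (x : K) := by
  rw [RingHom.mem_ker, (hR _ x.2).lt_iff_ne']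
  exact stdPart_eq_zero

end ArchimedeanClass

namespace Filter.Germ

open ArchimedeanClass

variable {α : Type*} {l : Ultrafilter α}

theorem ratCast_def (q : ℚ) :
    (q : Germ (l : Filter α) ℚ) = ((fun _ ↦ q : α → ℚ) : Germ (l : Filter α) ℚ) :=
  (map_ratCast ((coeRingHom (l : Filter α)).comp (Pi.constRingHom α ℚ)) q).symm

variable {u : α → ℚ} {r : ℝ}

theorem ratCast_lt_coe_of_tendsto (hu : Tendsto (fun a ↦ (u a : ℝ)) l (𝓝 r)) {p : ℚ}
    (hp : p < r) : (p : Germ (l : Filter α) ℚ) < u := by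
  rw [ratCast_def, coe_lt]
  exact (hu.eventually_const_lt hp).mono fun _ h ↦ by exact_mod_cast h

theorem coe_lt_ratCast_of_tendsto (hu : Tendsto (fun a ↦ (u a : ℝ)) l (𝓝 r)) {p : ℚ}
    (hp : r < p) : (u : Germ (l : Filter α) ℚ) < p := by
  rw [ratCast_def, coe_lt]
  exact (hu.eventually_lt_const hp).mono fun _ h ↦ by exact_mod_cast h

theorem mk_coe_nonneg_of_tendsto (hu : Tendsto (fun a ↦ (u a : ℝ)) l (𝓝 r)) :
    0 ≤ ArchimedeanClass.mk (u : Germ (l : Filter α) ℚ) := by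
  obtain ⟨a, ha⟩ := exists_rat_lt r
  obtain ⟨b, hb⟩ := exists_rat_gt r
  exact (le_min (mk_ratCast_nonneg a) (mk_ratCast_nonneg b)).trans <| min_le_mk_of_le_of_le
    (ratCast_lt_coe_of_tendsto hu ha).le (coe_lt_ratCast_of_tendsto hu hb).le

theorem stdPart_coe_of_tendsto (hu : Tendsto (fun a ↦ (u a : ℝ)) l (𝓝 r)) :
    stdPart (u : Germ (l : Filter α) ℚ) = r :=
  stdPart_eq_of_forall_ratCast (mk_coe_nonneg_of_tendsto hu)
    (fun _ hp ↦ (ratCast_lt_coe_of_tendsto hu hp).le)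
    (fun _ hp ↦ (coe_lt_ratCast_of_tendsto hu hp).le)

end Filter.Germ

open ArchimedeanClass in
theorem finite_mod_infinitesimal_iso_real_general
    (F : Ultrafilter ℕ) (hnp : ∀ n : ℕ, {n} ∉ F)
    (R : Subring (Germ (F : Filter ℕ) ℚ))
    (hR : (R : Set (Germ (F : Filter ℕ) ℚ)) =
      {x | ∃ q : ℚ, 0 < q ∧ |x| ≤ (q : Germ (F : Filter ℕ) ℚ)})
    (I : Ideal R)
    (hI : ∀ y : R, y ∈ I ↔
      ∀ q : ℚ, 0 < q → |(y : Germ (F : Filter ℕ) ℚ)| < (q : Germ (F : Filter ℕ) ℚ)) :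
    Nonempty ((R ⧸ I) ≃+* ℝ) := by
  have hmem (x) : x ∈ R ↔ 0 ≤ ArchimedeanClass.mk x := by
    rw [← SetLike.mem_coe, hR, Set.mem_ofPred_eq, mk_nonneg_iff_exists_abs_le_ratCast]
  let φ := stdPartRingHom R fun x ↦ (hmem x).1
  have hker : I = RingHom.ker φ := by
    ext y
    rw [hI, mem_ker_stdPartRingHom, mk_pos_iff_forall_abs_lt_ratCast]
  have hF : (F : Filter ℕ) ≤ atTop := Nat.cofinite_eq_atTop ▸
    le_cofinite_iff_compl_singleton_mem.2 fun n ↦ F.compl_mem_iff_notMem.2 (hnp n)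
  have hsurj : Function.Surjective φ := fun r ↦ by
    obtain ⟨u, -, -, hu⟩ := Real.exists_seq_rat_strictMono_tendsto r
    replace hu := hu.mono_left hF
    exact ⟨⟨u, (hmem _).2 (Germ.mk_coe_nonneg_of_tendsto hu)⟩, Germ.stdPart_coe_of_tendsto hu⟩
  exact ⟨(Ideal.quotEquivOfEq hker).trans (RingHom.quotientKerEquivOfSurjective hsurj)⟩

/-- For a selective ultrafilter `F`, the quotient of the ring of
finite-or-infinitesimal hyperrationals by the ideal of infinitesimals is isomorphic
to the field of real numbers. -/
theorem finite_mod_infinitesimal_iso_real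
    (F : Ultrafilter ℕ) (hnp : ∀ n : ℕ, {n} ∉ F)
    (hsel : ∀ f : ℕ → ℕ, (∀ i, f ⁻¹' {i} ∉ F) → ∃ B ∈ F, Set.InjOn f B)
    (R : Subring (Germ (F : Filter ℕ) ℚ))
    (hR : (R : Set (Germ (F : Filter ℕ) ℚ)) =
      {x | ∃ q : ℚ, 0 < q ∧ |x| ≤ (q : Germ (F : Filter ℕ) ℚ)})
    (I : Ideal R)
    (hI : ∀ y : R, y ∈ I ↔
      ∀ q : ℚ, 0 < q → |(y : Germ (F : Filter ℕ) ℚ)| < (q : Germ (F : Filter ℕ) ℚ)) :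
    Nonempty ((R ⧸ I) ≃+* ℝ) :=
  finite_mod_infinitesimal_iso_real_general F hnp R hR I hI
end

section
/- Let F be a non-principal ultrafilter on ℕ and (x_n) a sequence of pairwise-distinct-on-a-big-set rationals bounded on some set in F (i.e., {n | k < x_n ≤ k+1} ∈ F for some integer k). If F is selective and x is the class of (x_n) with x_n < x for all n in a set E ∈ F, then there exists B ⊆ E, B ∈ F, such that for the partition J_s = {i ∈ E | x − 1/s ≤ x_i < x − 1/(s+1)}, each J_s ∉ F and B meets each J_s in at most one point; consequently (x_n)_{n∈B} is Cauchy. -/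
/-!
Along `F` the sequence stays in `[k, k + 1]`, so it has an `F`-limit `r ∈ ℝ`, and `x_i ≤ r` on `E`.
A point of `J_s` satisfies `r - 1/s ≤ x_i ≤ r - 1/(s+1)`, so `J_s ∉ F`, while every `i ∈ E` with
`r - 1 < x_i < r` lies in some `J_s`; by injectivity at most one `i` has `x_i = r`, so the `J_s`
cover a set in `F`. Selectivity applied to the index map `i ↦ s` gives `B ∈ F` meeting each `J_s`
at most once. All but finitely many points of `B` then lie in `J_s` with `s > N`, hence within
`1/N` of `r`, so `x` converges to `r` along `B`.
-/

open Filter Set Topology Function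

section UltrafilterLimit

variable {α : Type*} {φ : Ultrafilter α}

theorem Filter.Germ.const_ratCast {β : Type*} [DivisionRing β] (q : ℚ) :
    ((q : β) : Germ (φ : Filter α) β) = (q : Germ (φ : Filter α) β) :=
  map_ratCast ((Germ.coeRingHom (φ : Filter α)).comp (Pi.constRingHom α β)) q

theorem Filter.Germ.ratCast_eq_const (q : ℚ) :
    ((q : ℚ) : Germ (φ : Filter α) ℚ) = Germ.const q := by
  simpa using (Germ.const_ratCast (φ := φ) (β := ℚ) q).symm

variable {u : α → ℚ} {r : ℝ}

theorem le_of_ratCast_le_germ (hr : Tendsto (fun a => (u a : ℝ)) φ (𝓝 r)) {q : ℚ}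
    (h : ((q : ℚ) : Germ (φ : Filter α) ℚ) ≤ u) : (q : ℝ) ≤ r := by
  rw [Germ.ratCast_eq_const] at h
  exact ge_of_tendsto hr ((Germ.coe_le.mp h).mono fun _ ha => by exact_mod_cast ha)

theorem le_of_germ_le_ratCast (hr : Tendsto (fun a => (u a : ℝ)) φ (𝓝 r)) {q : ℚ}
    (h : (u : Germ (φ : Filter α) ℚ) ≤ ((q : ℚ) : Germ (φ : Filter α) ℚ)) : r ≤ q := by
  rw [Germ.ratCast_eq_const] at h
  exact le_of_tendsto hr ((Germ.coe_le.mp h).mono fun _ ha => by exact_mod_cast ha)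

theorem ratCast_lt_germ_of_lt (hr : Tendsto (fun a => (u a : ℝ)) φ (𝓝 r)) {q : ℚ}
    (h : (q : ℝ) < r) : ((q : ℚ) : Germ (φ : Filter α) ℚ) < u := by
  rw [Germ.ratCast_eq_const]
  exact Germ.coe_lt.mpr ((hr.eventually (lt_mem_nhds h)).mono fun _ ha => by exact_mod_cast ha)

end UltrafilterLimit

theorem IsCompact.exists_tendsto_ultrafilter {α X : Type*} [TopologicalSpace X] {s : Set X}
    (hs : IsCompact s) (φ : Ultrafilter α) {v : α → X} (hv : ∀ᶠ a in φ, v a ∈ s) :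
    ∃ x ∈ s, Tendsto v φ (𝓝 x) :=
  hs.ultrafilter_le_nhds (φ.map v) (by rwa [Ultrafilter.coe_map, le_principal_iff])

theorem Ultrafilter.setOf_ne_mem_of_injOn {α β : Type*} {φ : Ultrafilter α}
    (hφ : ∀ a, {a} ∉ φ) {v : α → β} {D : Set α} (hD : D ∈ φ) (hinj : InjOn v D) (b : β) :
    {a | v a ≠ b} ∈ φ := by
  by_contra h
  have hfib : D ∩ {a | v a = b} ∈ φ :=
    inter_mem hD (Ultrafilter.compl_notMem_iff (s := {a | v a = b}).mp h)
  obtain ⟨a, ha⟩ := Filter.nonempty_of_mem hfib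
  refine hφ a (mem_of_superset hfib fun a' ha' => ?_)
  exact hinj ha'.1 ha.1 (ha'.2.trans ha.2.symm)

theorem Ultrafilter.exists_mem_subsingleton_inter {α : Type*} {φ : Ultrafilter α}
    (hsel : ∀ f : α → ℕ, (∀ i, f ⁻¹' {i} ∉ φ) → ∃ B ∈ φ, InjOn f B)
    {J : ℕ → Set α} (hdisj : Pairwise (Disjoint on J)) (hJ : ∀ s, J s ∉ φ) (hU : ⋃ s, J s ∈ φ) :
    ∃ B ∈ φ, B ⊆ ⋃ s, J s ∧ ∀ s, (B ∩ J s).Subsingleton := by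
  classical
  let f : α → ℕ := fun a => if h : ∃ s, a ∈ J s then h.choose else 0
  have hf : ∀ s, ∀ a ∈ J s, f a = s := fun s a ha =>
    have h : ∃ s, a ∈ J s := ⟨s, ha⟩
    (dif_pos h).trans (hdisj.eq (not_disjoint_iff.2 ⟨a, h.choose_spec, ha⟩))
  have hfib : ∀ s, f ⁻¹' {s} ⊆ J s ∪ (⋃ t, J t)ᶜ := by
    intro s a ha
    by_cases h : ∃ t, a ∈ J t
    · obtain ⟨t, ht⟩ := h
      rw [mem_preimage, mem_singleton_iff, hf t a ht] at ha
      exact Or.inl (ha ▸ ht)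
    · exact Or.inr (by simpa using h)
  obtain ⟨B, hB, hinj⟩ := hsel f fun s hs => by
    rcases Ultrafilter.union_mem_iff.1 (mem_of_superset hs (hfib s)) with h | h
    exacts [hJ s h, Ultrafilter.compl_mem_iff_notMem.1 h hU]
  exact ⟨B ∩ ⋃ s, J s, inter_mem hB hU, inter_subset_right,
    fun s a ha b hb => hinj ha.1.1 hb.1.1 ((hf s a ha.2).trans (hf s b hb.2).symm)⟩

theorem tendsto_comp_of_subsingleton_inter {α X : Type*} [PseudoMetricSpace X] {J : ℕ → Set α}
    {B : Set α} {v : α → X} {x : X} (hB : B ⊆ ⋃ s, J s) (hsub : ∀ s, (B ∩ J s).Subsingleton)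
    (hclose : ∀ s, ∀ a ∈ J s, dist (v a) x ≤ 1 / s) {e : ℕ → α} (he : Injective e)
    (hrange : range e ⊆ B) : Tendsto (v ∘ e) atTop (𝓝 x) := by
  refine Metric.tendsto_nhds.2 fun ε hε => ?_
  obtain ⟨N, hN⟩ := exists_nat_one_div_lt hε
  have hfin : (⋃ s ∈ Iic N, B ∩ J s).Finite := (finite_Iic N).biUnion fun s _ => (hsub s).finite
  have hfar : ∀ᶠ k in atTop, e k ∉ ⋃ s ∈ Iic N, B ∩ J s :=
    Nat.cofinite_eq_atTop ▸ (hfin.preimage he.injOn).eventually_cofinite_notMem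
  refine hfar.mono fun k hk => ?_
  obtain ⟨s, hs⟩ := mem_iUnion.1 (hB (hrange (mem_range_self k)))
  have hNs : N < s := by
    by_contra! h
    exact hk (mem_biUnion h ⟨hrange (mem_range_self k), hs⟩)
  calc dist (v (e k)) x ≤ 1 / s := hclose s _ hs
    _ ≤ 1 / (N + 1) := one_div_le_one_div_of_le (by positivity) (by exact_mod_cast hNs)
    _ < ε := hN

theorem Rat.isCauSeq_abs_of_tendsto_cast {u : ℕ → ℚ} {r : ℝ}
    (h : Tendsto (fun k => (u k : ℝ)) atTop (𝓝 r)) : IsCauSeq abs u := by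
  intro ε hε
  obtain ⟨N, hN⟩ := Metric.cauchySeq_iff'.1 h.cauchySeq ε (by exact_mod_cast hε)
  refine ⟨N, fun j hj => ?_⟩
  have := hN j hj
  rwa [Rat.dist_cast, Rat.dist_eq, ← Rat.cast_sub, ← Rat.cast_abs, Rat.cast_lt] at this

section Piece

variable {α : Type*} {φ : Ultrafilter α} {u : α → ℚ} {E : Set α} {r : ℝ}

/-- The paper's `J_s`. -/
def partitionPiece (φ : Ultrafilter α) (u : α → ℚ) (E : Set α) (s : ℕ) : Set α :=
  {i ∈ E | (u : Germ (φ : Filter α) ℚ) - ((1 / (s : ℚ)) : ℚ) ≤ ((u i : ℚ) : Germ (φ : Filter α) ℚ) ∧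
    ((u i : ℚ) : Germ (φ : Filter α) ℚ) <
      (u : Germ (φ : Filter α) ℚ) - ((1 / ((s : ℚ) + 1)) : ℚ)}

theorem pairwise_disjoint_partitionPiece : Pairwise (Disjoint on partitionPiece φ u E) := by
  refine (pairwise_disjoint_on _).2 fun s t hst => Set.disjoint_left.2 fun i hs ht => ?_
  have hle : ((1 / (t : ℚ) : ℚ) : Germ (φ : Filter α) ℚ) ≤
      ((1 / ((s : ℚ) + 1) : ℚ) : Germ (φ : Filter α) ℚ) :=
    Rat.cast_le.2 (one_div_le_one_div_of_le (by positivity) (by exact_mod_cast hst))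
  exact (hs.2.2.trans_le ((sub_le_sub_left hle _).trans ht.2.1)).false

theorem bounds_of_mem_partitionPiece (hr : Tendsto (fun a => (u a : ℝ)) φ (𝓝 r)) {s : ℕ} {i : α}
    (hi : i ∈ partitionPiece φ u E s) :
    r - 1 / s ≤ u i ∧ (u i : ℝ) ≤ r - 1 / (s + 1) := by
  obtain ⟨-, hlo, hhi⟩ := hi
  constructor
  · have := le_of_germ_le_ratCast hr (q := u i + 1 / s)
      (by rw [Rat.cast_add]; exact sub_le_iff_le_add.mp hlo)
    push_cast at this
    linarith
  · have := le_of_ratCast_le_germ hr (q := u i + 1 / (s + 1))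
      (by rw [Rat.cast_add]; exact (lt_sub_iff_add_lt.mp hhi).le)
    push_cast at this
    linarith

theorem dist_le_of_mem_partitionPiece (hr : Tendsto (fun a => (u a : ℝ)) φ (𝓝 r)) {s : ℕ} {i : α}
    (hi : i ∈ partitionPiece φ u E s) :
    dist (u i : ℝ) r ≤ 1 / s := by
  obtain ⟨hlo, hhi⟩ := bounds_of_mem_partitionPiece hr hi
  have : (0 : ℝ) ≤ 1 / (s + 1) := by positivity
  rw [Real.dist_eq, abs_le]
  constructor <;> linarith

theorem partitionPiece_notMem (hr : Tendsto (fun a => (u a : ℝ)) φ (𝓝 r)) (s : ℕ) :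
    partitionPiece φ u E s ∉ φ := fun h => by
  have hle : r ≤ r - 1 / (s + 1) :=
    le_of_tendsto hr (eventually_of_mem h fun i hi => (bounds_of_mem_partitionPiece hr hi).2)
  have : (0 : ℝ) < 1 / (s + 1) := by positivity
  linarith

theorem exists_mem_partitionPiece (hr : Tendsto (fun a => (u a : ℝ)) φ (𝓝 r)) {i : α}
    (hiE : i ∈ E) (hlow : r - 1 < u i) (hlt : u i < r) :
    ∃ s, i ∈ partitionPiece φ u E s := by
  classical
  have hex : ∃ s : ℕ, ((u i : ℚ) : Germ (φ : Filter α) ℚ) < u - ((1 / ((s : ℚ) + 1)) : ℚ) := by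
    obtain ⟨s, hs⟩ := exists_nat_one_div_lt (sub_pos.2 hlt)
    have := ratCast_lt_germ_of_lt hr (q := u i + 1 / (s + 1)) (by push_cast; linarith)
    rw [Rat.cast_add] at this
    exact ⟨s, lt_sub_iff_add_lt.mpr this⟩
  obtain ⟨n, hn⟩ : ∃ n, Nat.find hex = n + 1 := Nat.exists_eq_succ_of_ne_zero fun h0 => by
    have h := lt_sub_iff_add_lt.mp (Nat.find_spec hex)
    rw [h0, ← Rat.cast_add] at h
    have := le_of_ratCast_le_germ hr h.le
    push_cast at this
    linarith
  refine ⟨n + 1, hiE, ?_, ?_⟩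
  · rw [Nat.cast_succ]
    exact not_lt.mp (Nat.find_min hex (hn ▸ n.lt_succ_self))
  · exact hn ▸ Nat.find_spec hex

end Piece

/-- If `F` is selective, `(x_n)` is injective on a big set, bounded on a big
set, and `x_n < x` (in `ℚ*`) for all `n` in some big set `E`, then there is a big
`B ⊆ E` meeting each piece `J_s = {i ∈ E | x - 1/s ≤ x_i < x - 1/(s+1)}` (each of which
is small) in at most one point; consequently the subsequence of `(x_n)` along `B` is
Cauchy. -/
theorem small_partition_selection_gives_cauchy
    (F : Ultrafilter ℕ) (hnp : ∀ n : ℕ, {n} ∉ F)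
    (hsel : ∀ f : ℕ → ℕ, (∀ i, f ⁻¹' {i} ∉ F) → ∃ B ∈ F, Set.InjOn f B)
    (x : ℕ → ℚ)
    (hdist : ∃ D ∈ F, Set.InjOn x D)
    (hbdd : ∃ k : ℤ, {n : ℕ | (k : ℚ) < x n ∧ x n ≤ (k : ℚ) + 1} ∈ F)
    (E : Set ℕ) (hE : E ∈ F)
    (hlt : ∀ n ∈ E, ((x n : ℚ) : Germ (F : Filter ℕ) ℚ) < (x : Germ (F : Filter ℕ) ℚ)) :
    ∃ B ⊆ E, B ∈ F ∧
      (∀ s : ℕ, 1 ≤ s →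
        {i ∈ E | (x : Germ (F : Filter ℕ) ℚ) - ((1 / (s : ℚ)) : ℚ) ≤ ((x i : ℚ) : Germ (F : Filter ℕ) ℚ) ∧
          ((x i : ℚ) : Germ (F : Filter ℕ) ℚ) < (x : Germ (F : Filter ℕ) ℚ) - ((1 / ((s : ℚ) + 1)) : ℚ)} ∉ F) ∧
      (∀ s : ℕ, 1 ≤ s →
        (B ∩ {i ∈ E | (x : Germ (F : Filter ℕ) ℚ) - ((1 / (s : ℚ)) : ℚ) ≤ ((x i : ℚ) : Germ (F : Filter ℕ) ℚ) ∧
          ((x i : ℚ) : Germ (F : Filter ℕ) ℚ) < (x : Germ (F : Filter ℕ) ℚ) - ((1 / ((s : ℚ) + 1)) : ℚ)}).Subsingleton) ∧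
      (∀ e : ℕ → ℕ, StrictMono e → Set.range e = B → IsCauSeq abs (fun k => x (e k))) := by
  obtain ⟨k, hk⟩ := hbdd
  obtain ⟨D, hD, hinj⟩ := hdist
  obtain ⟨r, -, hr⟩ := (isCompact_Icc (a := (k : ℝ)) (b := k + 1)).exists_tendsto_ultrafilter F
    (v := fun n => (x n : ℝ))
    (mem_of_superset hk fun n hn => ⟨by exact_mod_cast hn.1.le, by exact_mod_cast hn.2⟩)
  have hcover : ⋃ s, partitionPiece F x E s ∈ F := by
    filter_upwards [hE, hr.eventually (lt_mem_nhds (sub_one_lt r)),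
      F.setOf_ne_mem_of_injOn hnp hD (Rat.cast_injective.comp_injOn hinj) r] with i hiE hlow hne
    exact mem_iUnion.2 (exists_mem_partitionPiece hr hiE hlow
      ((le_of_ratCast_le_germ hr (hlt i hiE).le).lt_of_ne hne))
  obtain ⟨B, hB, hBcover, hBsub⟩ := F.exists_mem_subsingleton_inter hsel
    pairwise_disjoint_partitionPiece (partitionPiece_notMem hr) hcover
  refine ⟨B, hBcover.trans (iUnion_subset fun s => sep_subset _ _), hB,
    fun s _ => partitionPiece_notMem hr s, fun s _ => hBsub s, fun e he hrange => ?_⟩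
  exact Rat.isCauSeq_abs_of_tendsto_cast (tendsto_comp_of_subsingleton_inter hBcover hBsub
    (fun s _ => dist_le_of_mem_partitionPiece hr) he.injective hrange.subset)
end
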